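/- There exists an absolute constant C > 0 such that for every M ≥ 0, every twice continuously differentiable compactly supported g : ℝ³ → ℝ³ with |g(x)| ≤ M for all x, and every continuously differentiable compactly supported v : ℝ³ → ℝ³, one has ∫_{ℝ³} |v|² |∇g|⁴ dx ≤ C M² ∫_{ℝ³} ( |∇g|² |∇v|² + |v|² |∇²g|² ) dx. -/

import Mathlib

/-!
Write `P = |v|² |∇g|²` and `N = |g|²`. Since `½ ΔN = |∇g|² + g·Δg`, Green's formula gives
`∫ P |∇g|² = -∫ (½ ∇P·∇N + P g·Δg)`. Pointwise, `|∇N|² ≤ 4M²|∇g|²`, `|∇|v|²|² ≤ 4|v|²|∇v|²`,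
`|∇|∇g|²|² ≤ 4|∇g|²|∇²g|²` and `(g·Δg)² ≤ 3M²|∇²g|²`, so Cauchy–Schwarz and AM–GM bound the
new integrand by `½ |v|²|∇g|⁴ + (21/2) M² (|∇g|²|∇v|² + |v|²|∇²g|²)`. Absorbing the first term
into the left-hand side gives the inequality with `C = 21`.
-/

open MeasureTheory

noncomputable section

/-- Euclidean three-space. -/
abbrev E3 := EuclideanSpace ℝ (Fin 3)

/-- The j-th partial derivative of a scalar function on ℝ³. -/
def pder (j : Fin 3) (f : E3 → ℝ) : E3 → ℝ :=
  fun x => fderiv ℝ f x (EuclideanSpace.single j 1)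

/-- |∇v|², the squared Euclidean norm of the gradient of v : ℝ³ → ℝ³. -/
def grad2 (v : E3 → E3) (x : E3) : ℝ :=
  ∑ i : Fin 3, ∑ j : Fin 3, (pder j (fun y => v y i) x) ^ 2

/-- |∇²v|², the squared norm of the second derivatives of v : ℝ³ → ℝ³. -/
def hess2 (v : E3 → E3) (x : E3) : ℝ :=
  ∑ i : Fin 3, ∑ j : Fin 3, ∑ k : Fin 3, (pder k (pder j (fun y => v y i)) x) ^ 2

/-- |∇³v|², the squared norm of the third derivatives of v : ℝ³ → ℝ³. -/
def third2 (v : E3 → E3) (x : E3) : ℝ :=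
  ∑ i : Fin 3, ∑ j : Fin 3, ∑ k : Fin 3, ∑ l : Fin 3,
    (pder l (pder k (pder j (fun y => v y i))) x) ^ 2

open Finset

def gradSq (F : E3 → ℝ) (x : E3) : ℝ := ∑ j : Fin 3, (pder j F x) ^ 2

def gradDot (F G : E3 → ℝ) (x : E3) : ℝ := ∑ j : Fin 3, pder j F x * pder j G x

def lap (F : E3 → ℝ) (x : E3) : ℝ := ∑ j : Fin 3, pder j (pder j F) x

def innerLap (g : E3 → E3) (x : E3) : ℝ := ∑ i : Fin 3, g x i * lap (fun y => g y i) x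

section Calculus

variable {ι : Type*} [Fintype ι] {F G : E3 → ℝ} {f : ι → E3 → ℝ} {x : E3}

theorem ContDiff.pder {n : WithTop ℕ∞} (hF : ContDiff ℝ (n + 1) F) (j : Fin 3) :
    ContDiff ℝ n (pder j F) :=
  (hF.fderiv_right le_rfl).clm_apply contDiff_const

theorem HasCompactSupport.pder (hF : HasCompactSupport F) (j : Fin 3) :
    HasCompactSupport (pder j F) :=
  hF.fderiv_apply (𝕜 := ℝ) _

theorem pder_mul (j : Fin 3) (hF : DifferentiableAt ℝ F x) (hG : DifferentiableAt ℝ G x) :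
    pder j (fun y => F y * G y) x = pder j F x * G x + F x * pder j G x := by
  simp only [pder, fderiv_fun_mul hF hG, add_apply, smul_apply, smul_eq_mul]
  ring

theorem pder_const_mul (j : Fin 3) (c : ℝ) (hF : DifferentiableAt ℝ F x) :
    pder j (fun y => c * F y) x = c * pder j F x := by
  simp [pder, fderiv_const_mul hF]

theorem pder_sum (j : Fin 3) (hf : ∀ i, DifferentiableAt ℝ (f i) x) :
    pder j (fun y => ∑ i, f i y) x = ∑ i, pder j (f i) x := by
  simp [pder, fderiv_fun_sum fun i _ => hf i]

theorem pder_sum_sq (j : Fin 3) (hf : ∀ i, DifferentiableAt ℝ (f i) x) :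
    pder j (fun y => ∑ i, f i y ^ 2) x = 2 * ∑ i, f i x * pder j (f i) x := by
  rw [pder_sum (f := fun i y => f i y ^ 2) j fun i => (hf i).pow 2, mul_sum]
  refine sum_congr rfl fun i _ => ?_
  simp only [sq]
  rw [pder_mul j (hf i) (hf i)]
  ring

theorem gradSq_sum_sq_le (hf : ∀ i, DifferentiableAt ℝ (f i) x) :
    gradSq (fun y => ∑ i, f i y ^ 2) x ≤ 4 * (∑ i, f i x ^ 2) * ∑ i, gradSq (f i) x := by
  unfold gradSq
  simp_rw [pder_sum_sq _ hf]
  calc ∑ j : Fin 3, (2 * ∑ i, f i x * pder j (f i) x) ^ 2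
      ≤ ∑ j : Fin 3, 4 * ((∑ i, f i x ^ 2) * ∑ i, pder j (f i) x ^ 2) := by
        gcongr with j
        rw [mul_pow]
        gcongr
        · norm_num
        · exact sum_mul_sq_le_sq_mul_sq _ _ _
    _ = 4 * (∑ i, f i x ^ 2) * ∑ i, ∑ j : Fin 3, pder j (f i) x ^ 2 := by
        rw [sum_comm (f := fun i j => pder j (f i) x ^ 2), ← mul_sum, ← mul_sum, mul_assoc]

theorem lap_sum_sq (hf : ∀ i, ContDiff ℝ 2 (f i)) :
    lap (fun y => ∑ i, f i y ^ 2) x =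
      2 * (∑ i, gradSq (f i) x + ∑ i, f i x * lap (f i) x) := by
  have hd : ∀ i, Differentiable ℝ (f i) := fun i => (hf i).differentiable two_ne_zero
  have hd' : ∀ i j, Differentiable ℝ (pder j (f i)) := fun i j =>
    ((hf i).pder (n := 1) j).differentiable one_ne_zero
  have hgrad : ∀ j, pder j (fun y => ∑ i, f i y ^ 2) =
      fun y => 2 * ∑ i, f i y * pder j (f i) y :=
    fun j => funext fun y => pder_sum_sq j fun i => hd i y
  have hterm : ∀ j, pder j (fun y => 2 * ∑ i, f i y * pder j (f i) y) x =
      2 * ∑ i, (pder j (f i) x ^ 2 + f i x * pder j (pder j (f i)) x) := fun j => by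
    have hprod : ∀ i, Differentiable ℝ fun y => f i y * pder j (f i) y :=
      fun i => (hd i).mul (hd' i j)
    rw [pder_const_mul j 2 (Differentiable.fun_sum (fun i _ => hprod i) x),
      pder_sum (f := fun i y => f i y * pder j (f i) y) j fun i => hprod i x]
    simp only [pder_mul j (hd _ x) (hd' _ j x), sq]
  simp only [lap, gradSq, hgrad, hterm, ← mul_sum, sum_add_distrib]
  rw [sum_comm (f := fun j i => pder j (f i) x ^ 2), sum_comm (f := fun j i => f i x * _)]
  simp only [mul_sum]

end Calculus

section Green

variable {F G : E3 → ℝ}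

theorem integrable_gradDot (hF : ContDiff ℝ 1 F) (hFcs : HasCompactSupport F)
    (hG : ContDiff ℝ 1 G) : Integrable (gradDot F G) :=
  integrable_finsetSum _ fun j _ => ((hF.pder (n := 0) j).continuous.mul
    (hG.pder (n := 0) j).continuous).integrable_of_hasCompactSupport (hFcs.pder j).mul_right

theorem integral_mul_lap (hF : ContDiff ℝ 1 F) (hFcs : HasCompactSupport F)
    (hG : ContDiff ℝ 2 G) : ∫ x, F x * lap G x = -∫ x, gradDot F G x := by
  have hdF : ∀ j, Continuous (pder j F) := fun j => (hF.pder (n := 0) j).continuous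
  have hdG : ∀ j, ContDiff ℝ 1 (pder j G) := fun j => hG.pder (n := 1) j
  have hddG : ∀ j, Continuous (pder j (pder j G)) := fun j => ((hdG j).pder (n := 0) j).continuous
  have hint : ∀ {H : E3 → ℝ}, Continuous H → Integrable fun x => F x * H x := fun hH =>
    (hF.continuous.mul hH).integrable_of_hasCompactSupport hFcs.mul_right
  have hint' : ∀ j, Integrable fun x => pder j F x * pder j G x := fun j =>
    ((hdF j).mul (hdG j).continuous).integrable_of_hasCompactSupport (hFcs.pder j).mul_right
  simp only [lap, gradDot, mul_sum]
  rw [integral_finsetSum _ fun j _ => hint (hddG j), integral_finsetSum _ fun j _ => hint' j,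
    ← sum_neg_distrib]
  refine sum_congr rfl fun j _ => ?_
  exact integral_mul_fderiv_eq_neg_fderiv_mul_of_integrable (hint' j)
    (hint (hddG j)) (hint (hdG j).continuous)
    (fun x _ => hF.differentiable one_ne_zero x) (fun x _ => (hdG j).differentiable one_ne_zero x)

end Green

section VectorFields

variable {g v : E3 → E3} {x : E3}

theorem continuous_lap {F : E3 → ℝ} (hF : ContDiff ℝ 2 F) : Continuous (lap F) :=
  continuous_finsetSum _ fun j _ => ((hF.pder (n := 1) j).pder (n := 0) j).continuous

theorem contDiff_grad2 {n : WithTop ℕ∞} (hg : ContDiff ℝ (n + 1) g) : ContDiff ℝ n (grad2 g) :=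
  ContDiff.sum fun i _ => ContDiff.sum fun j _ => ((contDiff_euclidean.1 hg i).pder j).pow 2

theorem continuous_hess2 (hg : ContDiff ℝ 2 g) : Continuous (hess2 g) :=
  continuous_finsetSum _ fun i _ => continuous_finsetSum _ fun j _ => continuous_finsetSum _
    fun k _ => ((((contDiff_euclidean.1 hg i).pder (n := 1) j).pder (n := 0) k).continuous.pow 2)

theorem continuous_innerLap (hg : ContDiff ℝ 2 g) : Continuous (innerLap g) :=
  continuous_finsetSum _ fun i _ =>
    ((contDiff_euclidean.1 hg i).continuous).mul (continuous_lap (contDiff_euclidean.1 hg i))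

theorem hasCompactSupport_grad2 (hv : HasCompactSupport v) : HasCompactSupport (grad2 v) := by
  have hc : ∀ i j, HasCompactSupport fun x => pder j (fun y => v y i) x ^ 2 := fun i j =>
    ((hv.comp_left (g := fun y : E3 => y i) rfl).pder j).comp_left (g := fun t : ℝ => t ^ 2)
      (by norm_num)
  have hsum : grad2 v = ∑ i : Fin 3, ∑ j : Fin 3, fun x => pder j (fun y => v y i) x ^ 2 := by
    ext x
    simp [grad2]
  rw [hsum]
  exact .finset_sum fun i _ => .finset_sum fun j _ => hc i j

theorem grad2_eq_lap_normSq_sub_innerLap (hg : ContDiff ℝ 2 g) (x : E3) :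
    grad2 g x = lap (fun y => ‖g y‖ ^ 2) x / 2 - innerLap g x := by
  simp only [EuclideanSpace.real_norm_sq_eq]
  rw [lap_sum_sq fun i => contDiff_euclidean.1 hg i, innerLap]
  simp only [grad2, gradSq]
  ring

theorem integral_mul_grad2 {P : E3 → ℝ} (hP : ContDiff ℝ 1 P) (hPcs : HasCompactSupport P)
    (hg : ContDiff ℝ 2 g) :
    ∫ x, P x * grad2 g x =
      -∫ x, (gradDot P (fun y => ‖g y‖ ^ 2) x / 2 + P x * innerLap g x) := by
  have hN : ContDiff ℝ 2 fun y => ‖g y‖ ^ 2 := hg.norm_sq ℝ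
  have hint : ∀ {H : E3 → ℝ}, Continuous H → Integrable fun x => P x * H x := fun hH =>
    (hP.continuous.mul hH).integrable_of_hasCompactSupport hPcs.mul_right
  have hS := hint (continuous_innerLap hg)
  calc ∫ x, P x * grad2 g x
      = (∫ x, P x * lap (fun y => ‖g y‖ ^ 2) x) / 2 - ∫ x, P x * innerLap g x := by
        simp only [grad2_eq_lap_normSq_sub_innerLap hg, mul_sub, ← mul_div_assoc]
        rw [integral_sub ((hint (continuous_lap hN)).div_const 2) hS, integral_div]
    _ = -∫ x, (gradDot P (fun y => ‖g y‖ ^ 2) x / 2 + P x * innerLap g x) := by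
        rw [integral_mul_lap hP hPcs hN, integral_add ((integrable_gradDot hP hPcs
          (hN.of_le one_le_two)).div_const 2) hS, integral_div]
        ring

end VectorFields

section Algebra

theorem neg_le_add_of_sq_le_four_mul_mul {x p q : ℝ} (hp : 0 ≤ p) (hq : 0 ≤ q)
    (h : x ^ 2 ≤ 4 * p * q) : -x ≤ p + q := by
  nlinarith [sq_nonneg (p - q)]

variable {ι : Type*} [Fintype ι]

theorem neg_le_of_grad_bounds {dV dA dN : ι → ℝ} {V a W b S M : ℝ} (hV : 0 ≤ V) (ha : 0 ≤ a)
    (hW : 0 ≤ W) (hb : 0 ≤ b) (hdV : ∑ j, dV j ^ 2 ≤ 4 * V * W)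
    (hdA : ∑ j, dA j ^ 2 ≤ 4 * a * b) (hdN : ∑ j, dN j ^ 2 ≤ 4 * M ^ 2 * a)
    (hS : S ^ 2 ≤ 3 * M ^ 2 * b) :
    -((∑ j, (dV j * a + V * dA j) * dN j) / 2 + V * a * S) ≤
      V * a ^ 2 / 2 + 21 / 2 * M ^ 2 * (a * W + V * b) := by
  set X₁ := ∑ j, dV j * dN j
  set X₂ := ∑ j, dA j * dN j
  have hsum : ∑ j, (dV j * a + V * dA j) * dN j = a * X₁ + V * X₂ := by
    simp only [X₁, X₂, mul_sum, ← sum_add_distrib]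
    exact sum_congr rfl fun j _ => by ring
  have hX₁ : X₁ ^ 2 ≤ 4 * V * W * (4 * M ^ 2 * a) :=
    (sum_mul_sq_le_sq_mul_sq _ _ _).trans (mul_le_mul hdV hdN (sum_nonneg fun j _ => sq_nonneg _)
      (by positivity))
  have hX₂ : X₂ ^ 2 ≤ 4 * a * b * (4 * M ^ 2 * a) :=
    (sum_mul_sq_le_sq_mul_sq _ _ _).trans (mul_le_mul hdA hdN (sum_nonneg fun j _ => sq_nonneg _)
      (by positivity))
  -- AM-GM, splitting `V a²` into three equal parts
  have h₁ : -(a * X₁ / 2) ≤ V * a ^ 2 / 6 + 6 * M ^ 2 * (a * W) :=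
    neg_le_add_of_sq_le_four_mul_mul (by positivity) (by positivity) (by
      nlinarith [mul_le_mul_of_nonneg_left hX₁ (sq_nonneg a)])
  have h₂ : -(V * X₂ / 2) ≤ V * a ^ 2 / 6 + 6 * M ^ 2 * (V * b) :=
    neg_le_add_of_sq_le_four_mul_mul (by positivity) (by positivity) (by
      nlinarith [mul_le_mul_of_nonneg_left hX₂ (sq_nonneg V)])
  have h₃ : -(V * a * S) ≤ V * a ^ 2 / 6 + 9 / 2 * M ^ 2 * (V * b) :=
    neg_le_add_of_sq_le_four_mul_mul (by positivity) (by positivity) (by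
      nlinarith [mul_le_mul_of_nonneg_left hS (sq_nonneg (V * a))])
  have hWa : 0 ≤ M ^ 2 * (a * W) := by positivity
  rw [hsum]
  linarith

end Algebra

section PointwiseBounds

variable {g v : E3 → E3} {x : E3}

theorem grad2_nonneg : 0 ≤ grad2 g x := by
  unfold grad2
  positivity

theorem hess2_nonneg : 0 ≤ hess2 g x := by
  unfold hess2
  positivity

theorem gradSq_normSq_le (hv : DifferentiableAt ℝ v x) :
    gradSq (fun y => ‖v y‖ ^ 2) x ≤ 4 * ‖v x‖ ^ 2 * grad2 v x := by
  simp only [EuclideanSpace.real_norm_sq_eq]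
  exact gradSq_sum_sq_le (differentiableAt_euclidean.1 hv)

theorem gradSq_grad2_le (hg : ContDiff ℝ 2 g) :
    gradSq (grad2 g) x ≤ 4 * grad2 g x * hess2 g x := by
  have hsum : grad2 g = fun y => ∑ p : Fin 3 × Fin 3, pder p.2 (fun z => g z p.1) y ^ 2 := by
    ext y
    simp [grad2, Fintype.sum_prod_type]
  have hess : hess2 g x = ∑ p : Fin 3 × Fin 3, gradSq (pder p.2 fun z => g z p.1) x := by
    simp [hess2, gradSq, Fintype.sum_prod_type]
  rw [hess, hsum]
  exact gradSq_sum_sq_le fun p =>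
    ((contDiff_euclidean.1 hg p.1).pder (n := 1) p.2).differentiable one_ne_zero x

theorem sq_lap_le (F : E3 → ℝ) (x : E3) : lap F x ^ 2 ≤ 3 * ∑ j, gradSq (pder j F) x :=
  calc lap F x ^ 2 ≤ 3 * ∑ j : Fin 3, pder j (pder j F) x ^ 2 := by
        simpa [lap] using
          sq_sum_le_card_mul_sum_sq (s := univ) (f := fun j => pder j (pder j F) x)
    _ ≤ 3 * ∑ j, gradSq (pder j F) x := by
        gcongr with j
        exact single_le_sum (f := fun k => pder k (pder j F) x ^ 2)
          (fun k _ => sq_nonneg _) (mem_univ j)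

theorem sq_innerLap_le : innerLap g x ^ 2 ≤ 3 * ‖g x‖ ^ 2 * hess2 g x :=
  calc innerLap g x ^ 2 ≤ ‖g x‖ ^ 2 * ∑ i, lap (fun y => g y i) x ^ 2 := by
        rw [EuclideanSpace.real_norm_sq_eq]
        exact sum_mul_sq_le_sq_mul_sq _ _ _
    _ ≤ ‖g x‖ ^ 2 * ∑ i, 3 * ∑ j, gradSq (pder j fun y => g y i) x := by
        gcongr with i
        exact sq_lap_le _ x
    _ = 3 * ‖g x‖ ^ 2 * hess2 g x := by
        simp only [hess2, gradSq, ← mul_sum]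
        ring

theorem neg_gradDot_add_mul_innerLap_le (hg : ContDiff ℝ 2 g) (hv : ContDiff ℝ 1 v) {M : ℝ}
    (hgM : ‖g x‖ ≤ M) :
    -(gradDot (fun y => ‖v y‖ ^ 2 * grad2 g y) (fun y => ‖g y‖ ^ 2) x / 2 +
        ‖v x‖ ^ 2 * grad2 g x * innerLap g x) ≤
      ‖v x‖ ^ 2 * grad2 g x ^ 2 / 2 +
        21 / 2 * M ^ 2 * (grad2 g x * grad2 v x + ‖v x‖ ^ 2 * hess2 g x) := by
  have hM : ‖g x‖ ^ 2 ≤ M ^ 2 := pow_le_pow_left₀ (norm_nonneg _) hgM 2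
  have ha : 0 ≤ grad2 g x := grad2_nonneg
  have hb : 0 ≤ hess2 g x := hess2_nonneg
  simp only [gradDot, pder_mul _ ((hv.norm_sq ℝ).differentiable one_ne_zero x)
    ((contDiff_grad2 (n := 1) hg).differentiable one_ne_zero x)]
  exact neg_le_of_grad_bounds (by positivity) ha grad2_nonneg hb
    (gradSq_normSq_le (hv.differentiable one_ne_zero x)) (gradSq_grad2_le hg)
    ((gradSq_normSq_le (hg.differentiable two_ne_zero x)).trans (by gcongr))
    (sq_innerLap_le.trans (by gcongr))

end PointwiseBounds

theorem integral_normSq_mul_grad2_sq_le {g v : E3 → E3} {M : ℝ} (hg : ContDiff ℝ 2 g)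
    (hgM : ∀ x, ‖g x‖ ≤ M) (hv : ContDiff ℝ 1 v) (hvcs : HasCompactSupport v) :
    ∫ x, ‖v x‖ ^ 2 * grad2 g x ^ 2 ≤ (∫ x, ‖v x‖ ^ 2 * grad2 g x ^ 2) / 2 +
      21 / 2 * M ^ 2 * ∫ x, (grad2 g x * grad2 v x + ‖v x‖ ^ 2 * hess2 g x) := by
  have hV : ContDiff ℝ 1 fun x => ‖v x‖ ^ 2 := hv.norm_sq ℝ
  have hVcs : HasCompactSupport fun x => ‖v x‖ ^ 2 :=
    hvcs.norm.comp_left (g := fun t : ℝ => t ^ 2) (by norm_num)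
  set P : E3 → ℝ := fun x => ‖v x‖ ^ 2 * grad2 g x
  have hP : ContDiff ℝ 1 P := hV.mul (contDiff_grad2 (n := 1) hg)
  have hPcs : HasCompactSupport P := hVcs.mul_right
  have he : Integrable fun x => ‖v x‖ ^ 2 * grad2 g x ^ 2 :=
    (hV.continuous.mul ((contDiff_grad2 (n := 1) hg).continuous.pow 2)
      ).integrable_of_hasCompactSupport hVcs.mul_right
  have hR : Integrable fun x => grad2 g x * grad2 v x + ‖v x‖ ^ 2 * hess2 g x :=
    (((contDiff_grad2 (n := 1) hg).continuous.mul (contDiff_grad2 (n := 0) hv).continuous).add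
      (hV.continuous.mul (continuous_hess2 hg))).integrable_of_hasCompactSupport
      ((hasCompactSupport_grad2 hvcs).mul_left.add hVcs.mul_right)
  have hD : Integrable fun x => gradDot P (fun y => ‖g y‖ ^ 2) x / 2 + P x * innerLap g x :=
    ((integrable_gradDot hP hPcs ((hg.norm_sq ℝ).of_le one_le_two)).div_const 2).add
      ((hP.continuous.mul (continuous_innerLap hg)).integrable_of_hasCompactSupport hPcs.mul_right)
  calc ∫ x, ‖v x‖ ^ 2 * grad2 g x ^ 2
      = ∫ x, P x * grad2 g x := by simp only [P, sq, mul_assoc]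
    _ = ∫ x, -(gradDot P (fun y => ‖g y‖ ^ 2) x / 2 + P x * innerLap g x) := by
        rw [integral_mul_grad2 hP hPcs hg, integral_neg]
    _ ≤ ∫ x, (‖v x‖ ^ 2 * grad2 g x ^ 2 / 2 +
          21 / 2 * M ^ 2 * (grad2 g x * grad2 v x + ‖v x‖ ^ 2 * hess2 g x)) :=
        integral_mono hD.neg ((he.div_const 2).add (hR.const_mul _)) fun x =>
          neg_gradDot_add_mul_innerLap_le hg hv (hgM x)
    _ = _ := by rw [integral_add (he.div_const 2) (hR.const_mul _), integral_div,
          integral_const_mul]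

/-- inequality (2.15): there is an absolute constant C > 0 such that for
every M ≥ 0, every C² compactly supported g : ℝ³ → ℝ³ with |g| ≤ M everywhere, and
every C¹ compactly supported v : ℝ³ → ℝ³,
∫ |v|² |∇g|⁴ ≤ C M² ∫ (|∇g|² |∇v|² + |v|² |∇²g|²). -/
theorem mixed_fourth_power_bound :
    ∃ C : ℝ, 0 < C ∧ ∀ M : ℝ, 0 ≤ M →
      ∀ g : E3 → E3, ContDiff ℝ 2 g → HasCompactSupport g → (∀ x : E3, ‖g x‖ ≤ M) →
      ∀ v : E3 → E3, ContDiff ℝ 1 v → HasCompactSupport v →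
        ∫ x, ‖v x‖ ^ 2 * (grad2 g x) ^ 2 ≤
          C * M ^ 2 * ∫ x, (grad2 g x * grad2 v x + ‖v x‖ ^ 2 * hess2 g x) := by
  refine ⟨21, by norm_num, fun M _ g hg _ hgM v hv hvcs => ?_⟩
  linarith [integral_normSq_mul_grad2_sq_le hg hgM hv hvcs]

end
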